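/- arXiv:1911.02824 — 6 statements merged into one kernel-verified Lean document; each statement's English description precedes it below -/
import Mathlib

section
/- For every positive integer n, n! < √(2π) · ((n + 1/2)/e)^(n + 1/2). -/
open Real Nat Filter Topology

/-!
The sequence `n! / ((n + 1/2)/e)^(n + 1/2)` is strictly increasing and, by Stirling's
formula, tends to `√(2π)`, so each of its terms lies strictly below `√(2π)`. After taking
logarithms and substituting `x = 1/(2n + 2)`, monotonicity becomes
`(1 - x) log((1 + x)/(1 - x)) + 2x log(1 + x) < 2x` on `(0, 1)`: the difference of the two
sides vanishes at `0` and has derivative `log(1 - x²) < 0`.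
-/

lemma one_sub_mul_log_div_add_two_mul_log_lt {x : ℝ} (hx0 : 0 < x) (hx1 : x < 1) :
    (1 - x) * log ((1 + x) / (1 - x)) + 2 * x * log (1 + x) < 2 * x := by
  set g : ℝ → ℝ := fun y ↦
    (1 - y) * (log (1 + y) - log (1 - y)) + 2 * y * log (1 + y) - 2 * y
  have hg' : ∀ y ∈ Set.Ioo (-1 : ℝ) 1, HasDerivAt g (log (1 + y) + log (1 - y)) y := by
    rintro y ⟨hy0, hy1⟩
    have hp : 1 + y ≠ 0 := by linarith
    have hm : 1 - y ≠ 0 := by linarith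
    have hlp := ((hasDerivAt_id' y).const_add 1).log hp
    have hlm := ((hasDerivAt_id' y).const_sub 1).log hm
    refine ((((hasDerivAt_id' y).const_sub 1).mul (hlp.sub hlm)).add
      (((hasDerivAt_id' y).const_mul 2).mul hlp) |>.sub
        ((hasDerivAt_id' y).const_mul 2)).congr_deriv ?_
    simp only [Pi.sub_apply]
    field_simp
    ring
  have hanti : StrictAntiOn g (Set.Icc 0 x) := by
    refine strictAntiOn_of_deriv_neg (convex_Icc 0 x) ?_ fun y hy ↦ ?_
    · exact fun y hy ↦
        (hg' y ⟨by linarith [hy.1], by linarith [hy.2]⟩).continuousAt.continuousWithinAt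
    · rw [interior_Icc] at hy
      obtain ⟨hy0, hyx⟩ := hy
      rw [(hg' y ⟨by linarith, by linarith⟩).deriv, ← log_mul (by linarith) (by linarith)]
      exact log_neg (by nlinarith) (by nlinarith)
  have h := hanti ⟨le_rfl, hx0.le⟩ ⟨hx0.le, le_rfl⟩ hx0
  simp only [g, log_div (by linarith : 1 + x ≠ 0) (by linarith : 1 - x ≠ 0)] at h ⊢
  norm_num at h
  linarith

lemma mul_log_div_add_log_div_lt_one {a : ℝ} (ha : 0 < a) :
    a * log ((a + 1) / a) + log ((a + 1) / (a + 1 / 2)) < 1 := by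
  set x := 1 / (2 * a + 1) with hx
  have hx0 : 0 < x := by positivity
  have hx1 : x < 1 := by rw [hx, div_lt_one (by positivity)]; linarith
  have h := one_sub_mul_log_div_add_two_mul_log_lt hx0 hx1
  have hquot : (1 + x) / (1 - x) = (a + 1) / a := by rw [hx]; field_simp; ring
  have hsucc : 1 + x = (a + 1) / (a + 1 / 2) := by rw [hx]; field_simp; ring
  have hcompl : 1 - x = 2 * x * a := by rw [hx]; field_simp; ring
  rw [hquot, hsucc, hcompl] at h
  nlinarith

noncomputable def burnsideSeq (n : ℕ) : ℝ :=
  n ! / (((n : ℝ) + 1 / 2) / exp 1) ^ ((n : ℝ) + 1 / 2)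

lemma burnsideSeq_pos (n : ℕ) : 0 < burnsideSeq n := by
  unfold burnsideSeq; positivity

lemma log_burnsideSeq (n : ℕ) :
    log (burnsideSeq n) =
      log (n ! : ℝ) - ((n : ℝ) + 1 / 2) * (log ((n : ℝ) + 1 / 2) - 1) := by
  rw [burnsideSeq, log_div (by positivity) (by positivity), log_rpow (by positivity),
    log_div (by positivity) (exp_pos 1).ne', log_exp]

lemma burnsideSeq_strictMono : StrictMono burnsideSeq := by
  refine strictMono_nat_of_lt_succ fun n ↦ ?_
  rw [← log_lt_log_iff (burnsideSeq_pos n) (burnsideSeq_pos (n + 1)), log_burnsideSeq,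
    log_burnsideSeq, factorial_succ, cast_mul, log_mul (by positivity) (by positivity)]
  have h := mul_log_div_add_log_div_lt_one (a := (n : ℝ) + 1 / 2) (by positivity)
  rw [log_div (by positivity) (by positivity), log_div (by positivity) (by positivity)] at h
  push_cast
  ring_nf at h ⊢
  linarith

lemma burnsideSeq_eq_stirlingSeq_mul {n : ℕ} (hn : n ≠ 0) :
    burnsideSeq n = Stirling.stirlingSeq n * √(2 * exp 1) *
      (1 + (-1 / 2) / ((n : ℝ) + 1 / 2)) ^ ((n : ℝ) + 1 / 2) := by
  have hn_pos : (0 : ℝ) < n := by positivity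
  have hshift : 1 + (-1 / 2) / ((n : ℝ) + 1 / 2) = n / (n + 1 / 2) := by field_simp; ring
  rw [burnsideSeq, Stirling.stirlingSeq, hshift, div_rpow hn_pos.le (by positivity),
    div_rpow (by positivity) (exp_pos 1).le, rpow_add hn_pos, rpow_add (exp_pos 1), rpow_natCast,
    rpow_natCast, ← sqrt_eq_rpow, ← sqrt_eq_rpow, div_pow, sqrt_mul zero_le_two,
    sqrt_mul zero_le_two]
  field_simp

lemma tendsto_burnsideSeq : Tendsto burnsideSeq atTop (𝓝 √(2 * π)) := by
  have hshift : Tendsto (fun n : ℕ ↦ (n : ℝ) + 1 / 2) atTop atTop :=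
    tendsto_atTop_add_const_right _ _ tendsto_natCast_atTop_atTop
  have hlim := (Stirling.tendsto_stirlingSeq_sqrt_pi.mul_const √(2 * exp 1)).mul
    ((tendsto_one_add_div_rpow_exp (-1 / 2)).comp hshift)
  have hval : √π * √(2 * exp 1) * exp (-1 / 2) = √(2 * π) := by
    rw [sqrt_mul zero_le_two, sqrt_mul zero_le_two, ← exp_half, mul_assoc, mul_assoc, ← exp_add]
    norm_num
    ring
  rw [hval] at hlim
  refine hlim.congr' ?_
  filter_upwards [eventually_ne_atTop 0] with n hn
  exact (burnsideSeq_eq_stirlingSeq_mul hn).symm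

theorem burnside_upper_general (n : ℕ) :
    (n ! : ℝ) < Real.sqrt (2 * π) * (((n : ℝ) + 1/2) / Real.exp 1) ^ ((n : ℝ) + 1/2) := by
  have hlt : burnsideSeq n < √(2 * π) :=
    (burnsideSeq_strictMono n.lt_succ_self).trans_le
      (burnsideSeq_strictMono.monotone.ge_of_tendsto tendsto_burnsideSeq (n + 1))
  rwa [burnsideSeq, div_lt_iff₀ (by positivity)] at hlt

theorem burnside_upper (n : ℕ) (hn : 0 < n) :
    (n ! : ℝ) < Real.sqrt (2 * π) * (((n : ℝ) + 1/2) / Real.exp 1) ^ ((n : ℝ) + 1/2) :=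
  burnside_upper_general n
end

section
/- For every positive integer n, there exists a unique real number a_n in the open interval (0, 1/2) such that n! = √(2π) · ((n + a_n)/e)^(n + a_n). -/
/-!
Put `f(x) = √(2π) (x/e)^x`. Since `log f(x) = log √(2π) + x log x - x` has derivative `log x`,
`f` is strictly increasing on `[1, ∞)`, so by the intermediate value theorem it suffices to show
`f(n) < n! < f(n + 1/2)`. The left inequality is Stirling's lower bound `√(2πn) (n/e)^n ≤ n!`.
For the right one, `log n! - x log x + x` at `x = n + 1/2` increases strictly with `n`: its
increment is `log (n + 1) - ∫_{n+1/2}^{n+3/2} log`, positive by concavity of `log`. By Stirling's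
formula it tends to `log √(2π)`, so it stays below that limit.
-/

open Nat hiding log log_pow
open Real Filter Topology Set

noncomputable def stirlingApprox (x : ℝ) : ℝ := √(2 * π) * (x / exp 1) ^ x

lemma stirlingApprox_eq_exp {x : ℝ} (hx : 0 < x) :
    stirlingApprox x = √(2 * π) * exp (x * log x - x) := by
  rw [stirlingApprox, rpow_def_of_pos (by positivity), log_div hx.ne' (exp_ne_zero 1), log_exp]
  ring_nf

lemma log_stirlingApprox {x : ℝ} (hx : 0 < x) :
    log (stirlingApprox x) = log √(2 * π) + (x * log x - x) := by
  rw [stirlingApprox_eq_exp hx, log_mul (by positivity) (exp_ne_zero _), log_exp]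

lemma continuousOn_stirlingApprox : ContinuousOn stirlingApprox (Ioi 0) := by
  unfold stirlingApprox
  exact continuousOn_const.mul <| (continuousOn_id.div_const _).rpow continuousOn_id
    fun x hx => Or.inl (div_ne_zero (ne_of_gt hx) (exp_ne_zero 1))

lemma strictMonoOn_mul_log_sub_self : StrictMonoOn (fun x => x * log x - x) (Ici 1) := by
  refine strictMonoOn_of_deriv_pos (convex_Ici 1) ?_ fun x hx => ?_
  · fun_prop (disch := intro x hx; exact ne_of_gt (one_pos.trans_le hx))
  · rw [interior_Ici] at hx
    have hd : HasDerivAt (fun x => x * log x - x) (log x + 1 - 1) x :=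
      (hasDerivAt_mul_log (one_pos.trans hx).ne').sub (hasDerivAt_id x)
    simpa [hd.deriv] using log_pos hx

lemma strictMonoOn_stirlingApprox : StrictMonoOn stirlingApprox (Ici 1) := by
  intro x hx y hy hxy
  rw [stirlingApprox_eq_exp (one_pos.trans_le hx), stirlingApprox_eq_exp (one_pos.trans_le hy)]
  gcongr ?_ * exp ?_
  exact strictMonoOn_mul_log_sub_self hx hy hxy

lemma stirlingApprox_natCast_lt_factorial {n : ℕ} (hn : n ≠ 0) : stirlingApprox n < n ! := by
  rcases (Nat.one_le_iff_ne_zero.mpr hn).eq_or_lt with rfl | hn2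
  · have : √(2 * π) < exp 1 := by
      rw [← sqrt_sq (exp_pos 1).le]
      exact sqrt_lt_sqrt (by positivity) (by nlinarith [pi_lt_d2, exp_one_gt_d9])
    simpa [stirlingApprox, ← div_eq_mul_inv, div_lt_one (exp_pos 1)]
  · calc stirlingApprox n = √(2 * π) * (n / exp 1) ^ n := by
          rw [stirlingApprox, rpow_natCast]
      _ < √(2 * π * n) * (n / exp 1) ^ n := by
          have hn1 : (1 : ℝ) < n := by exact_mod_cast hn2
          gcongr ?_ * _
          exact sqrt_lt_sqrt (by positivity) (lt_mul_right (by positivity) hn1)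
      _ ≤ n ! := Stirling.le_factorial_stirling n

-- `∫_{x-t}^{x+t} log < 2t log x`
lemma mul_log_add_sub_mul_log_sub_lt {x t : ℝ} (ht : 0 < t) (htx : t < x) :
    (x + t) * log (x + t) - (x - t) * log (x - t) < 2 * t * (1 + log x) := by
  set g : ℝ → ℝ := fun s =>
    (x + s) * log (x + s) - (x - s) * log (x - s) - 2 * s * (1 + log x)
  have hg : StrictAntiOn g (Icc 0 t) := by
    refine strictAntiOn_of_deriv_neg (convex_Icc 0 t) ?_ fun s hs => ?_
    · fun_prop (disch := intro s hs; linarith [hs.1, hs.2])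
    · rw [interior_Icc] at hs
      have hp : 0 < x + s := by linarith [hs.1]
      have hm : 0 < x - s := by linarith [hs.2]
      have hd : HasDerivAt g
          ((log (x + s) + 1) * 1 - (log (x - s) + 1) * (-1) - 2 * 1 * (1 + log x)) s :=
        (((hasDerivAt_mul_log hp.ne').comp s ((hasDerivAt_id s).const_add x)).sub
          ((hasDerivAt_mul_log hm.ne').comp s ((hasDerivAt_id s).const_sub x))).sub
          (((hasDerivAt_id' s).const_mul 2).mul_const _)
      have hlog : log (x + s) + log (x - s) < 2 * log x := by
        rw [← log_mul hp.ne' hm.ne', ← Nat.cast_ofNat, ← log_pow]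
        exact log_lt_log (by positivity) (by nlinarith [hs.1])
      rw [hd.deriv]
      linarith
  simpa [g] using hg (left_mem_Icc.mpr ht.le) (right_mem_Icc.mpr ht.le) ht

/-- `log (n! / ((n + 1/2)/e)^(n + 1/2))` -/
noncomputable def logStirlingSeqHalf (n : ℕ) : ℝ :=
  log n ! - ((n + 1 / 2) * log (n + 1 / 2) - (n + 1 / 2))

lemma logStirlingSeqHalf_lt_succ (n : ℕ) : logStirlingSeqHalf n < logStirlingSeqHalf (n + 1) := by
  have key := mul_log_add_sub_mul_log_sub_lt (x := n + 1) (t := 1 / 2) (by norm_num)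
    (by linarith [(n.cast_nonneg : (0 : ℝ) ≤ n)])
  rw [logStirlingSeqHalf, logStirlingSeqHalf, factorial_succ, Nat.cast_mul,
    log_mul (by positivity) (by positivity)]
  push_cast
  ring_nf at key ⊢
  linarith

lemma strictMono_logStirlingSeqHalf : StrictMono logStirlingSeqHalf :=
  strictMono_nat_of_lt_succ logStirlingSeqHalf_lt_succ

lemma logStirlingSeqHalf_eq {n : ℕ} (hn : n ≠ 0) :
    logStirlingSeqHalf n = log (Stirling.stirlingSeq n) + (log 2 + 1) / 2 +
      (n + 1 / 2) * log (1 + (-1 / 2) / (n + 1 / 2)) := by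
  have hn0 : (0 : ℝ) < n := by positivity
  have : 1 + (-1 / 2) / ((n : ℝ) + 1 / 2) = n / (n + 1 / 2) := by field_simp; ring
  rw [logStirlingSeqHalf, Stirling.log_stirlingSeq_formula, this, log_mul two_ne_zero hn0.ne',
    log_div hn0.ne' (exp_ne_zero 1), log_exp, log_div hn0.ne' (by positivity)]
  ring

lemma tendsto_logStirlingSeqHalf :
    Tendsto logStirlingSeqHalf atTop (𝓝 (log √(2 * π))) := by
  have hlim : Tendsto (fun n : ℕ => log (Stirling.stirlingSeq n) + (log 2 + 1) / 2 +
      (n + 1 / 2) * log (1 + (-1 / 2) / (n + 1 / 2))) atTop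
      (𝓝 (log √π + (log 2 + 1) / 2 + -1 / 2)) :=
    ((Stirling.tendsto_stirlingSeq_sqrt_pi.log (by positivity)).add_const _).add <|
      (tendsto_mul_log_one_add_div_atTop _).comp <|
        tendsto_atTop_add_const_right _ _ tendsto_natCast_atTop_atTop
  convert hlim.congr' (eventually_ne_atTop 0 |>.mono fun n hn => (logStirlingSeqHalf_eq hn).symm)
    using 2
  rw [log_sqrt (by positivity), log_sqrt pi_pos.le, log_mul two_ne_zero pi_ne_zero]
  ring

lemma logStirlingSeqHalf_lt (n : ℕ) : logStirlingSeqHalf n < log √(2 * π) :=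
  (strictMono_logStirlingSeqHalf n.lt_succ_self).trans_le <|
    strictMono_logStirlingSeqHalf.monotone.ge_of_tendsto tendsto_logStirlingSeqHalf _

lemma factorial_lt_stirlingApprox_add_half (n : ℕ) :
    (n ! : ℝ) < stirlingApprox (n + 1 / 2) := by
  have hpos : 0 < stirlingApprox (n + 1 / 2) := by
    rw [stirlingApprox_eq_exp (by positivity)]
    positivity
  rw [← log_lt_log_iff (by positivity) hpos, log_stirlingApprox (by positivity)]
  have := logStirlingSeqHalf_lt n
  rw [logStirlingSeqHalf] at this
  linarith

theorem exists_unique_a (n : ℕ) (hn : 0 < n) :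
    ∃! a : ℝ, a ∈ Set.Ioo (0 : ℝ) (1/2) ∧
      (n ! : ℝ) = Real.sqrt (2 * π) * (((n : ℝ) + a) / Real.exp 1) ^ ((n : ℝ) + a) := by
  have hn1 : (1 : ℝ) ≤ n := by exact_mod_cast hn
  have hcont : ContinuousOn (fun a : ℝ => stirlingApprox (n + a)) (Icc 0 (1 / 2)) :=
    continuousOn_stirlingApprox.comp (by fun_prop) fun a ha => show 0 < (n : ℝ) + a by
      linarith [ha.1]
  obtain ⟨a, ha, hfa⟩ := intermediate_value_Ioo (by norm_num) hcont
    ⟨by simpa using stirlingApprox_natCast_lt_factorial hn.ne',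
      factorial_lt_stirlingApprox_add_half n⟩
  refine ⟨a, ⟨ha, hfa.symm⟩, fun b ⟨hb, hfb⟩ => ?_⟩
  have := strictMonoOn_stirlingApprox.injOn (show (1 : ℝ) ≤ n + b by linarith [hb.1])
    (show (1 : ℝ) ≤ n + a by linarith [ha.1]) (hfb.symm.trans hfa.symm)
  linarith
end

section
/- Let a_n ∈ (0, 1/2) be defined by n! = √(2π) · ((n + a_n)/e)^(n + a_n) for each positive integer n. Then the sequence (a_n) is strictly increasing. -/
/-! Let `G x = x log x - x` (`logAntideriv`), an antiderivative of `log`. Taking logarithms, the defining equation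
reads `log n! = log √(2π) + G (n + a n)`, so `n! · (n + 1) = (n + 1)!` becomes
`G (n + 1 + a (n + 1)) - G (n + a n) = log (n + 1)`. If `a (n + 1) ≤ a n`, then since `G` is
increasing on `[1, ∞)` and `t ↦ G (t + 1) - G t` is strictly increasing (its derivative is
`log (1 + 1/t) > 0`), the left side is `< G (n + 3/2) - G (n + 1/2) = ∫_{n+1/2}^{n+3/2} log`,
which is at most `log (n + 1)` by concavity of `log`. -/

open Real Nat

noncomputable def logAntideriv (x : ℝ) : ℝ := x * log x - x

lemma hasDerivAt_logAntideriv {x : ℝ} (hx : x ≠ 0) : HasDerivAt logAntideriv (log x) x := by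
  have := (hasDerivAt_mul_log hx).sub (hasDerivAt_id' x)
  rwa [add_sub_cancel_right] at this

lemma continuousOn_logAntideriv {s : Set ℝ} (hs : (0 : ℝ) ∉ s) : ContinuousOn logAntideriv s :=
  fun _ hx => (hasDerivAt_logAntideriv (ne_of_mem_of_not_mem hx hs)).continuousAt.continuousWithinAt

lemma logAntideriv_strictMonoOn : StrictMonoOn logAntideriv (Set.Ici 1) := by
  refine strictMonoOn_of_hasDerivWithinAt_pos (convex_Ici 1) (f' := log)
    (continuousOn_logAntideriv (by simp)) (fun x hx => ?_) (fun x hx => ?_)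
  all_goals rw [interior_Ici] at hx
  · exact (hasDerivAt_logAntideriv (by linarith [hx.out])).hasDerivWithinAt
  · exact log_pos hx

lemma logAntideriv_add_one_sub_strictMonoOn :
    StrictMonoOn (fun t => logAntideriv (t + 1) - logAntideriv t) (Set.Ioi 0) := by
  refine strictMonoOn_of_hasDerivWithinAt_pos (convex_Ioi 0)
    (f' := fun t => log (t + 1) - log t) ?_ (fun x hx => ?_) (fun x hx => ?_)
  · exact ((continuousOn_logAntideriv (s := Set.Ioi 1) (by simp)).comp
      (continuousOn_id.add continuousOn_const) (fun x hx => by simp_all)).sub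
      (continuousOn_logAntideriv (by simp))
  all_goals rw [interior_Ioi] at hx; have hx : 0 < x := hx
  · exact (((hasDerivAt_logAntideriv (by linarith)).comp_add_const x 1).sub
      (hasDerivAt_logAntideriv hx.ne')).hasDerivWithinAt
  · simpa using log_lt_log hx (lt_add_one x)

/-- Midpoint bound `∫_{u-h}^{u+h} log ≤ 2 h log u` for the concave function `log`. -/
lemma logAntideriv_add_sub_le {u h : ℝ} (hh : 0 ≤ h) (hhu : h < u) :
    logAntideriv (u + h) - logAntideriv (u - h) ≤ 2 * h * log u := by
  have hu : 0 < u := hh.trans_lt hhu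
  let f : ℝ → ℝ := fun s => logAntideriv (u + s) - logAntideriv (u - s) - 2 * s * log u
  have hf : ∀ s ∈ Set.Ico 0 u, HasDerivAt f (log (u + s) + log (u - s) - 2 * log u) s := by
    intro s ⟨hs0, hsu⟩
    have := (((hasDerivAt_logAntideriv (x := u + s) (by linarith)).comp_const_add u s).sub
      ((hasDerivAt_logAntideriv (x := u - s) (by linarith)).comp_const_sub u s)).sub
      (((hasDerivAt_id' s).const_mul 2).mul_const (log u))
    exact this.congr_deriv (by ring)
  have hanti : AntitoneOn f (Set.Icc 0 h) := by
    refine antitoneOn_of_hasDerivWithinAt_nonpos (convex_Icc 0 h)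
      (f' := fun s => log (u + s) + log (u - s) - 2 * log u)
      (fun s hs => (hf s ⟨hs.1, hs.2.trans_lt hhu⟩).continuousAt.continuousWithinAt)
      (fun s hs => ?_) (fun s hs => ?_)
    all_goals rw [interior_Icc] at hs
    · exact (hf s ⟨hs.1.le, hs.2.trans hhu⟩).hasDerivWithinAt
    · have : log (u + s) + log (u - s) ≤ 2 * log u := by
        rw [← log_mul (by linarith [hs.1]) (by linarith [hs.2]), two_mul, ← log_mul hu.ne' hu.ne']
        exact log_le_log (by nlinarith [hs.1, hs.2]) (by nlinarith [sq_nonneg s])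
      linarith
  have := hanti ⟨le_rfl, hh⟩ ⟨hh, le_rfl⟩ hh
  simp only [f, add_zero, sub_zero, sub_self, mul_zero, zero_mul] at this
  linarith

lemma log_mul_div_exp_rpow_self {c x : ℝ} (hc : 0 < c) (hx : 0 < x) :
    log (c * (x / exp 1) ^ x) = log c + logAntideriv x := by
  rw [log_mul hc.ne' (rpow_pos_of_pos (by positivity) _).ne', log_rpow (by positivity),
    log_div hx.ne' (exp_pos 1).ne', log_exp, logAntideriv]
  ring

lemma lt_of_logAntideriv_sub_eq_log {u α β : ℝ} (hu : 0 < u) (hα : 0 ≤ α) (hα' : α < 1 / 2)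
    (hβ : 0 ≤ β) (heq : logAntideriv (u + 1 + β) - logAntideriv (u + α) = log (u + 1)) :
    α < β := by
  by_contra! hβα
  have hG : logAntideriv (u + 1 + β) ≤ logAntideriv (u + 1 + α) :=
    logAntideriv_strictMonoOn.monotoneOn (Set.mem_Ici.mpr (by linarith))
      (Set.mem_Ici.mpr (by linarith)) (by linarith)
  have hD : logAntideriv (u + α + 1) - logAntideriv (u + α) <
      logAntideriv (u + 1 / 2 + 1) - logAntideriv (u + 1 / 2) :=
    logAntideriv_add_one_sub_strictMonoOn (Set.mem_Ioi.mpr (by linarith))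
      (Set.mem_Ioi.mpr (by linarith)) (by linarith)
  have hmid := logAntideriv_add_sub_le (u := u + 1) (h := 1 / 2) (by norm_num) (by linarith)
  ring_nf at hG hD hmid heq
  linarith

theorem a_strictMono (a : ℕ → ℝ)
    (ha : ∀ n : ℕ, 0 < n → a n ∈ Set.Ioo (0 : ℝ) (1/2) ∧
      (n ! : ℝ) = Real.sqrt (2 * π) * (((n : ℝ) + a n) / Real.exp 1) ^ ((n : ℝ) + a n)) :
    ∀ m k : ℕ, 0 < m → m < k → a m < a k := by
  have hlog (n : ℕ) (hn : 0 < n) : log (n ! : ℝ) = log √(2 * π) + logAntideriv (n + a n) := by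
    have hn' : (0 : ℝ) < n := by exact_mod_cast hn
    rw [(ha n hn).2, log_mul_div_exp_rpow_self (by positivity) (by linarith [(ha n hn).1.1])]
  have hstep (n : ℕ) (hn : 0 < n) : a n < a (n + 1) := by
    obtain ⟨⟨han, han'⟩, -⟩ := ha n hn
    obtain ⟨⟨hbn, -⟩, -⟩ := ha (n + 1) n.succ_pos
    refine lt_of_logAntideriv_sub_eq_log (u := n) (by exact_mod_cast hn) han.le han' hbn.le ?_
    have hrec := hlog (n + 1) n.succ_pos
    rw [factorial_succ, cast_mul, log_mul (by positivity) (by positivity), hlog n hn] at hrec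
    push_cast at hrec
    linarith
  have hsucc : StrictMono (fun n => a (n + 1)) :=
    strictMono_nat_of_lt_succ fun n => hstep (n + 1) n.succ_pos
  intro m k hm hmk
  obtain ⟨m, rfl⟩ := Nat.exists_eq_add_one_of_ne_zero hm.ne'
  obtain ⟨k, rfl⟩ := Nat.exists_eq_add_one_of_ne_zero (hm.trans hmk).ne'
  exact hsucc (by omega)
end

section
/- Let a_n ∈ (0, 1/2) satisfy n! = √(2π) · ((n + a_n)/e)^(n + a_n). Then lim_{n→∞} a_n = 1/2. -/
open Real Nat Filter

/-!
With `x = n + a n`, taking logarithms turns the defining equation into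
`log n! = log √(2π) + x (log x - 1)`, while Stirling's formula gives
`log n! = log √(2π) + (n + 1/2) log n - n + o(1)`. For bounded `a`,
`(n + a)(log (n + a) - log n) = a + O(1/n)`, so the difference of the two expansions is
`(a n - 1/2) log n + o(1) = o(1)`, and dividing by `log n → ∞` gives `a n → 1/2`.
-/

lemma tendsto_log_factorial_sub_stirling :
    Tendsto (fun n : ℕ => Real.log (n ! : ℝ) - ((n + 1 / 2) * Real.log n - n)) atTop
      (nhds (Real.log √(2 * π))) := by
  have hlog_sqrt : Real.log √(2 * π) = Real.log √π + Real.log 2 / 2 := by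
    rw [log_sqrt (by positivity), log_sqrt pi_pos.le, log_mul two_ne_zero pi_pos.ne']
    ring
  rw [hlog_sqrt]
  refine Tendsto.congr' ?_
    ((Stirling.tendsto_stirlingSeq_sqrt_pi.log (by positivity)).add_const (Real.log 2 / 2))
  filter_upwards [eventually_gt_atTop 0] with n hn
  have hn : (0 : ℝ) < n := by exact_mod_cast hn
  rw [Stirling.log_stirlingSeq_formula, log_div hn.ne' (exp_ne_zero 1), log_exp,
    log_mul two_ne_zero hn.ne']
  ring

lemma log_sqrt_two_pi_mul_div_exp_rpow {x : ℝ} (hx : 0 < x) :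
    Real.log (√(2 * π) * (x / exp 1) ^ x) = Real.log √(2 * π) + x * (Real.log x - 1) := by
  rw [log_mul (by positivity) (by positivity), log_rpow (by positivity),
    log_div hx.ne' (exp_ne_zero 1), log_exp]

lemma mul_log_sub_log_mem_Icc {x b : ℝ} (hx : 0 < x) (hxb : 0 < x + b) :
    (x + b) * (Real.log (x + b) - Real.log x) ∈ Set.Icc b (b + b ^ 2 / x) := by
  have hy : 0 < (x + b) / x := by positivity
  rw [← log_div hxb.ne' hx.ne']
  constructor
  · calc b = (x + b) * (1 - ((x + b) / x)⁻¹) := by field_simp; ring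
      _ ≤ _ := mul_le_mul_of_nonneg_left (one_sub_inv_le_log_of_pos hy) hxb.le
  · calc (x + b) * Real.log ((x + b) / x) ≤ (x + b) * ((x + b) / x - 1) :=
          mul_le_mul_of_nonneg_left (log_le_sub_one_of_pos hy) hxb.le
      _ = b + b ^ 2 / x := by field_simp; ring

lemma tendsto_mul_log_sub_log_sub_of_abs_le (b : ℕ → ℝ) {C : ℝ}
    (hb : ∀ᶠ n in atTop, |b n| ≤ C) :
    Tendsto (fun n : ℕ => (n + b n) * (Real.log (n + b n) - Real.log n) - b n) atTop
      (nhds 0) := by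
  have hC : Tendsto (fun n : ℕ => C ^ 2 / n) atTop (nhds 0) :=
    tendsto_const_div_atTop_nhds_zero_nat _
  have hbig := tendsto_natCast_atTop_atTop (R := ℝ) |>.eventually_gt_atTop C
  refine squeeze_zero' ?_ ?_ hC <;> filter_upwards [hb, hbig] with n hbn hn
  all_goals
    have hn0 : (0 : ℝ) < n := lt_of_le_of_lt ((abs_nonneg _).trans hbn) hn
    have hxb : (0 : ℝ) < n + b n := by linarith [neg_abs_le (b n)]
    obtain ⟨hlow, hupp⟩ := mul_log_sub_log_mem_Icc hn0 hxb
  · linarith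
  · have : b n ^ 2 ≤ C ^ 2 := sq_le_sq' (by linarith [neg_abs_le (b n)]) (le_of_abs_le hbn)
    have : b n ^ 2 / n ≤ C ^ 2 / n := by gcongr
    linarith

theorem a_tendsto_half (a : ℕ → ℝ)
    (ha : ∀ n : ℕ, 0 < n → a n ∈ Set.Ioo (0 : ℝ) (1/2) ∧
      (n ! : ℝ) = Real.sqrt (2 * π) * (((n : ℝ) + a n) / Real.exp 1) ^ ((n : ℝ) + a n)) :
    Tendsto a atTop (nhds (1/2)) := by
  have hlog_factorial : ∀ᶠ n : ℕ in atTop,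
      Real.log (n ! : ℝ) = Real.log √(2 * π) + (n + a n) * (Real.log (n + a n) - 1) := by
    filter_upwards [eventually_gt_atTop 0] with n hn
    obtain ⟨⟨ha0, -⟩, hfact⟩ := ha n hn
    rw [hfact, log_sqrt_two_pi_mul_div_exp_rpow (by positivity)]
  have hstirling : Tendsto (fun n : ℕ => (n + a n) * (Real.log (n + a n) - 1)
      - ((n + 1 / 2) * Real.log n - n)) atTop (nhds 0) := by
    refine (tendsto_sub_nhds_zero_iff.2 tendsto_log_factorial_sub_stirling).congr' ?_
    filter_upwards [hlog_factorial] with n hn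
    rw [hn]
    ring
  have hbounded : ∀ᶠ n in atTop, |a n| ≤ 1 / 2 := by
    filter_upwards [eventually_gt_atTop 0] with n hn
    obtain ⟨⟨ha0, ha1⟩, -⟩ := ha n hn
    exact abs_le.2 ⟨by linarith, ha1.le⟩
  have hkey : Tendsto (fun n : ℕ => (a n - 1 / 2) * Real.log n) atTop (nhds 0) := by
    have hsub := hstirling.sub (tendsto_mul_log_sub_log_sub_of_abs_le a hbounded)
    rw [sub_zero] at hsub
    exact hsub.congr fun n => by ring
  have hlog : Tendsto (fun n : ℕ => Real.log n) atTop atTop :=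
    tendsto_log_atTop.comp tendsto_natCast_atTop_atTop
  refine tendsto_sub_nhds_zero_iff.1 <| (hkey.div_atTop hlog).congr' ?_
  filter_upwards [hlog.eventually_gt_atTop 0] with n hn
  exact mul_div_cancel_right₀ _ hn.ne'
end

section
/- For every positive integer n, √(2π) · ((n + c)/e)^(n + c) < n!, where c is any real number with 0 ≤ c ≤ 0.428844. -/
/-!
Take logarithms: the left-hand side becomes `log (2π) / 2 + f (n + c)` with `f x = x log x - x`,
and `f` is increasing on `[1, ∞)` since `f' = log`, so it suffices to treat `c = 0.428844`.
For `n ≥ 3` the estimate `log (n + c) ≤ log n + c / n` and Stirling's lower bound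
`log n! ≥ f n + log n / 2 + log (2π) / 2` leave the margin `c² / n < (1/2 - c) log n`.
The cases `n = 1` (where the constant is sharp) and `n = 2` are checked numerically.
-/

open Real
open scoped Nat

lemma log_lt_of_lt_sum_range_pow_div_factorial {x y : ℝ} (hx : 0 < x) (hy : 0 ≤ y) (N : ℕ)
    (h : x < ∑ i ∈ Finset.range N, y ^ i / i !) : log x < y :=
  (log_lt_iff_lt_exp hx).2 (h.trans_le (sum_le_exp_of_nonneg hy N))

-- The case `n = 1` has a margin of only `1.6e-8`, hence the many digits of `π`.
lemma log_two_mul_pi_lt : log (2 * π) < 1.8378770665 := by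
  refine log_lt_of_lt_sum_range_pow_div_factorial (by positivity) (by norm_num) 21 ?_
  refine (mul_lt_mul_of_pos_left pi_lt_d20 two_pos).trans_le ?_
  norm_num [Finset.sum_range_succ, Nat.factorial]

lemma log_one_point_four_two_eight_lt : log 1.428844 < 0.35686573 := by
  refine log_lt_of_lt_sum_range_pow_div_factorial (by norm_num) (by norm_num) 13 ?_
  norm_num [Finset.sum_range_succ, Nat.factorial]

lemma log_two_point_four_two_eight_lt : log 2.428844 < 0.88742 := by
  refine log_lt_of_lt_sum_range_pow_div_factorial (by norm_num) (by norm_num) 15 ?_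
  norm_num [Finset.sum_range_succ, Nat.factorial]

lemma log_sqrt_two_pi_mul_div_exp_rpow_self {x : ℝ} (hx : 0 < x) :
    log (√(2 * π) * (x / exp 1) ^ x) = log (2 * π) / 2 + (x * log x - x) := by
  rw [log_mul (by positivity) (by positivity), log_sqrt (by positivity), log_rpow (by positivity),
    log_div hx.ne' (exp_pos 1).ne', log_exp]
  ring

lemma monotoneOn_mul_log_sub_self : MonotoneOn (fun x : ℝ => x * log x - x) (Set.Ici 1) := by
  intro s (hs : 1 ≤ s) t _ hst
  have hs0 : 0 < s := one_pos.trans_le hs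
  have ht0 : 0 < t := hs0.trans_le hst
  have hquot : t - s ≤ t * (log t - log s) := by
    have := one_sub_inv_le_log_of_pos (div_pos ht0 hs0)
    rw [log_div ht0.ne' hs0.ne', inv_div] at this
    calc t - s = t * (1 - s / t) := by field_simp
      _ ≤ t * (log t - log s) := by gcongr
  have : 0 ≤ (t - s) * log s := mul_nonneg (by linarith) (log_nonneg hs)
  show s * log s - s ≤ t * log t - t
  linarith

lemma add_mul_log_add_sub_le {x a : ℝ} (hx : 0 < x) (ha : 0 ≤ a) :
    (x + a) * log (x + a) - (x + a) ≤ x * log x - x + a * log x + a ^ 2 / x := by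
  have hlog : log (x + a) ≤ log x + a / x := by
    have := log_le_sub_one_of_pos (div_pos (by linarith : 0 < x + a) hx)
    have hq : (x + a) / x - 1 = a / x := by field_simp; ring
    rw [log_div (by linarith) hx.ne', hq] at this
    linarith
  calc (x + a) * log (x + a) - (x + a) ≤ (x + a) * (log x + a / x) - (x + a) := by gcongr
    _ = x * log x - x + a * log x + a ^ 2 / x := by field_simp; ring

lemma log_two_mul_pi_div_two_add_lt_log_factorial (n : ℕ) (hn : 0 < n) :
    log (2 * π) / 2 + (((n : ℝ) + 0.428844) * log (n + 0.428844) - (n + 0.428844)) <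
      log (n ! : ℝ) := by
  have hpi := log_two_mul_pi_lt
  obtain rfl | rfl | hn3 : n = 1 ∨ n = 2 ∨ 3 ≤ n := by omega
  · have := log_one_point_four_two_eight_lt
    norm_num
    linarith
  · have := log_two_point_four_two_eight_lt
    have := log_two_gt_d9
    norm_num
    linarith
  · have hn3' : (3 : ℝ) ≤ n := by exact_mod_cast hn3
    have hlog : 1 < log n :=
      (lt_log_iff_exp_lt (by positivity)).2 (exp_one_lt_d9.trans (by linarith))
    have hsq : (0.428844 : ℝ) ^ 2 / n ≤ 0.428844 ^ 2 / 3 := by gcongr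
    have := add_mul_log_add_sub_le (by positivity : (0 : ℝ) < n) (by norm_num : (0 : ℝ) ≤ 0.428844)
    have := Stirling.le_log_factorial_stirling (by omega : n ≠ 0)
    linarith

theorem lower_bound_c (n : ℕ) (hn : 0 < n) (c : ℝ) (hc0 : 0 ≤ c) (hc1 : c ≤ 0.428844) :
    Real.sqrt (2 * π) * (((n : ℝ) + c) / Real.exp 1) ^ ((n : ℝ) + c) < (n ! : ℝ) := by
  have hn1 : (1 : ℝ) ≤ n := by exact_mod_cast hn
  rw [← log_lt_log_iff (by positivity) (by positivity),
    log_sqrt_two_pi_mul_div_exp_rpow_self (by positivity)]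
  have : (n + c) * log (n + c) - (n + c) ≤ (n + 0.428844) * log (n + 0.428844) - (n + 0.428844) :=
    monotoneOn_mul_log_sub_self (a := n + c) (b := n + 0.428844)
      (Set.mem_Ici.2 (by linarith)) (Set.mem_Ici.2 (by linarith)) (by linarith)
  linarith [log_two_mul_pi_div_two_add_lt_log_factorial n hn]
end

section
/- If a sequence (a_n) ⊂ (0, 1/2) satisfies n! = √(2π)·((n + a_n)/e)^(n + a_n), then lim_{n→∞} (n + a_n)^{a_n} / √n = 1. -/
/-!
Dividing the defining equation by `√(2n) (n/e)^n` gives the exact identity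
`(n + aₙ)^aₙ / √n = (stirlingSeq n / √π) · e^aₙ / (1 + aₙ/n)^n`.
The first factor tends to `1` by Stirling's formula, and so does the second, because
`n log (1 + aₙ/n) - aₙ = O(aₙ² / n)` for a bounded sequence `aₙ`.
-/

open Real Nat Filter
open scoped Topology

theorem Real.abs_log_one_add_sub_self_le {x : ℝ} (hx : |x| ≤ 1 / 2) :
    |log (1 + x) - x| ≤ 2 * x ^ 2 := by
  have h := abs_log_sub_add_sum_range_le (x := -x) (by rw [abs_neg]; linarith) 1
  simp only [Finset.sum_range_one, sub_neg_eq_add, abs_neg] at h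
  calc |log (1 + x) - x| ≤ |x| ^ 2 / (1 - |x|) := by
        convert h using 2; ring
    _ ≤ 2 * x ^ 2 := by
        rw [div_le_iff₀ (by linarith), sq_abs]
        nlinarith [sq_nonneg x]

theorem tendsto_nat_mul_log_one_add_div_sub {a : ℕ → ℝ} {C : ℝ} (hC : ∀ n, |a n| ≤ C) :
    Tendsto (fun n : ℕ => n * log (1 + a n / n) - a n) atTop (𝓝 0) := by
  refine squeeze_zero_norm' ?_ (tendsto_const_div_atTop_nhds_zero_nat (2 * C ^ 2))
  filter_upwards [eventually_gt_atTop 0, eventually_ge_atTop ⌈2 * C⌉₊] with n hn hCn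
  have hn' : (0 : ℝ) < n := by exact_mod_cast hn
  have hsmall : |a n / n| ≤ 1 / 2 := by
    have : 2 * C ≤ n := Nat.ceil_le.mp hCn
    rw [abs_div, Nat.abs_cast, div_le_iff₀ hn']
    linarith [hC n]
  calc ‖n * log (1 + a n / n) - a n‖ = n * |log (1 + a n / n) - a n / n| := by
        rw [Real.norm_eq_abs, ← abs_of_pos hn', ← abs_mul, abs_of_pos hn', mul_sub,
          mul_div_cancel₀ _ hn'.ne']
    _ ≤ n * (2 * (a n / n) ^ 2) := by gcongr; exact abs_log_one_add_sub_self_le hsmall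
    _ = 2 * (a n) ^ 2 / n := by field_simp
    _ ≤ 2 * C ^ 2 / n := by
        gcongr 2 * ?_ / _
        exact sq_le_sq' (abs_le.mp (hC n)).1 (abs_le.mp (hC n)).2

theorem tendsto_one_add_div_pow_div_exp {a : ℕ → ℝ} {C : ℝ} (hC : ∀ n, |a n| ≤ C) :
    Tendsto (fun n : ℕ => (1 + a n / n) ^ n / exp (a n)) atTop (𝓝 1) := by
  have h := (continuous_exp.tendsto 0).comp (tendsto_nat_mul_log_one_add_div_sub hC)
  rw [exp_zero] at h
  refine h.congr' ?_
  filter_upwards [eventually_gt_atTop ⌈C⌉₊] with n hn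
  have hn' : C < n := Nat.lt_of_ceil_lt hn
  have hpos : 0 < 1 + a n / n := by
    have : |a n / n| < 1 := by
      rw [abs_div, Nat.abs_cast, div_lt_one (by linarith [(abs_nonneg (a n)).trans (hC n)])]
      linarith [hC n]
    linarith [neg_abs_le (a n / n)]
  simp only [Function.comp_apply]
  rw [exp_sub, ← Real.log_pow, exp_log (pow_pos hpos n)]

theorem rpow_div_sqrt_eq_stirlingSeq {n : ℕ} (hn : 0 < n) {a : ℝ} (ha : 0 < n + a)
    (h : (n ! : ℝ) = √(2 * π) * ((n + a) / exp 1) ^ ((n : ℝ) + a)) :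
    (n + a) ^ a / √n = Stirling.stirlingSeq n / √π / ((1 + a / n) ^ n / exp a) := by
  have hn' : (0 : ℝ) < n := by exact_mod_cast hn
  have hsplit : ((n + a) / exp 1) ^ ((n : ℝ) + a)
      = (n + a) ^ n * (n + a) ^ a / (exp 1 ^ n * exp a) := by
    rw [div_rpow ha.le (exp_pos 1).le, rpow_add ha, rpow_natCast, exp_one_rpow, exp_add,
      exp_one_pow]
  have hone : 1 + a / n = (n + a) / n := by field_simp
  rw [Stirling.stirlingSeq, h, hsplit, hone, sqrt_mul (by norm_num), sqrt_mul (by norm_num),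
    div_pow, div_pow]
  have hsqrt_n : 0 < √(n : ℝ) := sqrt_pos.mpr hn'
  have hsqrt_pi : 0 < √π := sqrt_pos.mpr pi_pos
  have hsqrt_two : 0 < √(2 : ℝ) := by positivity
  field_simp

theorem intermediate_limit (a : ℕ → ℝ) (ha : ∀ n, a n ∈ Set.Ioo (0 : ℝ) (1/2))
    (heq : ∀ n : ℕ, 0 < n →
      (n ! : ℝ) = Real.sqrt (2 * π) * (((n : ℝ) + a n) / Real.exp 1) ^ ((n : ℝ) + a n)) :
    Tendsto (fun n : ℕ => ((n : ℝ) + a n) ^ (a n) / Real.sqrt n) atTop (nhds 1) := by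
  have hbound : ∀ n, |a n| ≤ 1 / 2 := fun n => abs_le.mpr ⟨by linarith [(ha n).1], (ha n).2.le⟩
  have hstirling : Tendsto (fun n => Stirling.stirlingSeq n / √π) atTop (𝓝 1) := by
    simpa [div_self (sqrt_pos.mpr pi_pos).ne'] using
      Stirling.tendsto_stirlingSeq_sqrt_pi.div_const √π
  have hlim := hstirling.div (tendsto_one_add_div_pow_div_exp hbound) one_ne_zero
  rw [div_one] at hlim
  refine hlim.congr' ?_
  filter_upwards [eventually_gt_atTop 0] with n hn
  exact (rpow_div_sqrt_eq_stirlingSeq hn (by linarith [(ha n).1]) (heq n hn)).symm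
end
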